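/- Let (Ω, F, P) be a probability space and mX ⊆ F a sub-σ-algebra. Let U, T : Ω → ℝ be integrable, and let ζ₀, θ₀, g be mX-measurable real functions such that ζ₀ is a version of E[T | mX] and ζ₀θ₀ is a version of E[U | mX]. Assume T g², U g, ζ₀ g², ζ₀ θ₀ g and ζ₀θ₀² are integrable. Then the cross-validation criterion satisfies E[T g²] − 2 E[U g] = E[ζ₀ (g − θ₀)²] − E[ζ₀ θ₀²]. Consequently, if ζ₀ ≥ 0 P-almost surely, then for every such g, E[T θ₀²] − 2E[U θ₀] ≤ E[T g²] − 2E[U g]; i.e., the criterion is minimized at g = θ₀. -/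
import Mathlib

open MeasureTheory

/-- Pull-out integral identity: `∫ φ f = ∫ φ ζ` when `ζ` is a version of `P[f|mX]`
and `φ` is `mX`-measurable. -/
lemma pullout {Ω : Type*} {F : MeasurableSpace Ω} (P : Measure Ω) [IsProbabilityMeasure P]
    (mX : MeasurableSpace Ω) (hmX : mX ≤ F)
    (f ζ φ : Ω → ℝ) (hf : Integrable f P)
    (hφ : Measurable[mX] φ)
    (hver : ζ =ᵐ[P] P[f | mX])
    (hφf : Integrable (fun ω => φ ω * f ω) P) :
    ∫ ω, φ ω * f ω ∂P = ∫ ω, φ ω * ζ ω ∂P := by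
  have h1 : P[(fun ω => φ ω * f ω) | mX] =ᵐ[P] fun ω => φ ω * (P[f | mX]) ω := by
    have := condExp_mul_of_stronglyMeasurable_left (μ := P) (m := mX)
      (hφ.stronglyMeasurable) (by simpa [Pi.mul_def] using hφf) hf
    simpa [Pi.mul_def] using this
  calc ∫ ω, φ ω * f ω ∂P = ∫ ω, (P[(fun ω => φ ω * f ω) | mX]) ω ∂P :=
        (integral_condExp hmX).symm
    _ = ∫ ω, φ ω * ζ ω ∂P := by
        refine integral_congr_ae (h1.trans ?_)
        filter_upwards [hver] with ω hω using by rw [hω]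

/-- The cross-validation criterion `E[T g²] − 2E[U g]` equals
`E[ζ₀ (g − θ₀)²] − E[ζ₀ θ₀²]`; hence if `ζ₀ ≥ 0` a.s. it is minimized at `g = θ₀`. -/
theorem stmt_3 {Ω : Type*} {F : MeasurableSpace Ω} (P : Measure Ω) [IsProbabilityMeasure P]
    (mX : MeasurableSpace Ω) (hmX : mX ≤ F)
    (U T : Ω → ℝ) (hU : Integrable U P) (hT : Integrable T P)
    (ζ₀ θ₀ g : Ω → ℝ)
    (hζ₀ : Measurable[mX] ζ₀) (hθ₀ : Measurable[mX] θ₀) (hg : Measurable[mX] g)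
    (hζver : ζ₀ =ᵐ[P] P[T | mX])
    (hνver : (fun ω => ζ₀ ω * θ₀ ω) =ᵐ[P] P[U | mX])
    (hTg : Integrable (fun ω => T ω * g ω ^ 2) P)
    (hUg : Integrable (fun ω => U ω * g ω) P)
    (hζg : Integrable (fun ω => ζ₀ ω * g ω ^ 2) P)
    (hζθg : Integrable (fun ω => ζ₀ ω * θ₀ ω * g ω) P)
    (hζθθ : Integrable (fun ω => ζ₀ ω * θ₀ ω ^ 2) P)
    (hTθ : Integrable (fun ω => T ω * θ₀ ω ^ 2) P)
    (hUθ : Integrable (fun ω => U ω * θ₀ ω) P) :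
    ((∫ ω, T ω * g ω ^ 2 ∂P) - 2 * ∫ ω, U ω * g ω ∂P
        = (∫ ω, ζ₀ ω * (g ω - θ₀ ω) ^ 2 ∂P) - ∫ ω, ζ₀ ω * θ₀ ω ^ 2 ∂P) ∧
    ((∀ᵐ ω ∂P, 0 ≤ ζ₀ ω) →
      (∫ ω, T ω * θ₀ ω ^ 2 ∂P) - 2 * ∫ ω, U ω * θ₀ ω ∂P
        ≤ (∫ ω, T ω * g ω ^ 2 ∂P) - 2 * ∫ ω, U ω * g ω ∂P) := by
  -- Rewrite each raw integral using the pull-out lemma.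
  have eTg : ∫ ω, T ω * g ω ^ 2 ∂P = ∫ ω, ζ₀ ω * g ω ^ 2 ∂P := by
    have := pullout P mX hmX T ζ₀ (fun ω => g ω ^ 2) hT (hg.pow measurable_const) hζver
      (by simpa [mul_comm] using hTg)
    simpa [mul_comm] using this
  have eUg : ∫ ω, U ω * g ω ∂P = ∫ ω, ζ₀ ω * θ₀ ω * g ω ∂P := by
    have := pullout P mX hmX U (fun ω => ζ₀ ω * θ₀ ω) g hU hg hνver
      (by simpa [mul_comm] using hUg)
    simp only [mul_comm] at this ⊢
    rw [this]
  have eTθ : ∫ ω, T ω * θ₀ ω ^ 2 ∂P = ∫ ω, ζ₀ ω * θ₀ ω ^ 2 ∂P := by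
    have := pullout P mX hmX T ζ₀ (fun ω => θ₀ ω ^ 2) hT (hθ₀.pow measurable_const) hζver
      (by simpa [mul_comm] using hTθ)
    simpa [mul_comm] using this
  have eUθ : ∫ ω, U ω * θ₀ ω ∂P = ∫ ω, ζ₀ ω * θ₀ ω ^ 2 ∂P := by
    have := pullout P mX hmX U (fun ω => ζ₀ ω * θ₀ ω) θ₀ hU hθ₀ hνver
      (by simpa [mul_comm] using hUθ)
    simp only [mul_comm] at this ⊢
    rw [this]
    exact integral_congr_ae (Filter.Eventually.of_forall fun ω => by ring)
  -- Expand the square.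
  have esq : ∫ ω, ζ₀ ω * (g ω - θ₀ ω) ^ 2 ∂P
      = (∫ ω, ζ₀ ω * g ω ^ 2 ∂P) - 2 * (∫ ω, ζ₀ ω * θ₀ ω * g ω ∂P)
        + ∫ ω, ζ₀ ω * θ₀ ω ^ 2 ∂P := by
    have : (fun ω => ζ₀ ω * (g ω - θ₀ ω) ^ 2)
        = fun ω => ζ₀ ω * g ω ^ 2 - 2 * (ζ₀ ω * θ₀ ω * g ω) + ζ₀ ω * θ₀ ω ^ 2 := by
      funext ω; ring
    have hsub : Integrable (fun ω => ζ₀ ω * g ω ^ 2 - 2 * (ζ₀ ω * θ₀ ω * g ω)) P :=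
      hζg.sub (hζθg.const_mul 2)
    have h2 : Integrable (fun ω => 2 * (ζ₀ ω * θ₀ ω * g ω)) P := hζθg.const_mul 2
    rw [this, integral_add hsub hζθθ, integral_sub hζg h2, integral_const_mul]
  have key : (∫ ω, T ω * g ω ^ 2 ∂P) - 2 * ∫ ω, U ω * g ω ∂P
      = (∫ ω, ζ₀ ω * (g ω - θ₀ ω) ^ 2 ∂P) - ∫ ω, ζ₀ ω * θ₀ ω ^ 2 ∂P := by
    rw [eTg, eUg, esq]; ring
  refine ⟨key, fun hpos => ?_⟩
  rw [key, eTθ, eUθ]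
  have : 0 ≤ ∫ ω, ζ₀ ω * (g ω - θ₀ ω) ^ 2 ∂P := by
    apply integral_nonneg_of_ae
    filter_upwards [hpos] with ω hω
    exact mul_nonneg hω (sq_nonneg _)
  linarith
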